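/- For all integers p ≥ 5 and k ≥ ⌊log₂(p−1)⌋, we have g^k_{⌊log₂(p−1)⌋}(p) ≥ 2^k + 1; that is, there exists a Gallai-k-coloring of the complete graph on 2^k vertices in which every set of p vertices spans edges in at least ⌊log₂(p−1)⌋ + 1 colors. -/

import Mathlib

open Finset

/-- A Gallai coloring: a symmetric edge-coloring of the complete graph on `V`
with no rainbow triangle. -/
def IsGallai {V β : Type*} (c : V → V → β) : Prop :=
  (∀ a b, c a b = c b a) ∧
  ∀ a b d : V, a ≠ b → a ≠ d → b ≠ d →
    ¬(c a b ≠ c a d ∧ c a b ≠ c b d ∧ c a d ≠ c b d)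

/-- The set of colors appearing on edges inside the vertex set `S`. -/
def colorsOn {V β : Type*} [DecidableEq V] [DecidableEq β]
    (c : V → V → β) (S : Finset V) : Finset β :=
  ((S ×ˢ S).filter fun p => p.1 ≠ p.2).image fun p => c p.1 p.2

/-- `gallaiNum k q p` is the smallest positive `n` such that every Gallai-`k`-coloring
of `K_n` contains a set of `p` vertices whose induced edges use at most `q` colors. -/
noncomputable def gallaiNum (k q p : ℕ) : ℕ :=
  sInf {n : ℕ | 0 < n ∧ ∀ c : Fin n → Fin n → Fin k, IsGallai c →
    ∃ S : Finset (Fin n), S.card = p ∧ (colorsOn c S).card ≤ q}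

/-!
Colour the edge `ab` of `K_{2^k}` by the position of the highest bit in which `a` and `b` differ.
This colour is an ultrametric (`a ^^^ d = (a ^^^ b) ^^^ (b ^^^ d)`), so every triangle is
isosceles and the colouring is Gallai. Each edge colour separates its endpoints by the
corresponding bit, so the vertices of a set `S` are determined by their bits at the colours used
on `S`, whence `#S ≤ 2 ^ #colours`, i.e. a `p`-set sees more than `log₂ (p - 1)` colours.
Since `sInf ∅ = 0`, the bound on `gallaiNum` also needs its defining set to be nonempty; a greedy
multicolour Ramsey argument provides that.
-/

namespace Nat

theorem log2_xor_le_max (x y : ℕ) : (x ^^^ y).log2 ≤ max x.log2 y.log2 := by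
  rcases eq_or_ne (x ^^^ y) 0 with h | h
  · simp [h]
  have hlt {z : ℕ} (hz : z.log2 ≤ max x.log2 y.log2) : z < 2 ^ (max x.log2 y.log2 + 1) :=
    Nat.lt_log2_self.trans_le (Nat.pow_le_pow_right two_pos (by omega))
  exact Nat.lt_succ_iff.1 <|
    (Nat.log2_lt h).2 (Nat.xor_lt_two_pow (hlt (le_max_left _ _)) (hlt (le_max_right _ _)))

theorem log2_xor_not_rainbow (a b d : ℕ) :
    ¬((a ^^^ b).log2 ≠ (a ^^^ d).log2 ∧ (a ^^^ b).log2 ≠ (b ^^^ d).log2 ∧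
      (a ^^^ d).log2 ≠ (b ^^^ d).log2) := by
  have hbd := log2_xor_le_max (a ^^^ b) (a ^^^ d)
  have hab := log2_xor_le_max (a ^^^ d) (b ^^^ d)
  have had := log2_xor_le_max (a ^^^ b) (b ^^^ d)
  rw [show (a ^^^ b) ^^^ (a ^^^ d) = b ^^^ d by simp [Nat.xor_assoc, Nat.xor_left_comm]] at hbd
  rw [show (a ^^^ d) ^^^ (b ^^^ d) = a ^^^ b by simp [← Nat.xor_assoc, Nat.xor_right_comm]] at hab
  rw [show (a ^^^ b) ^^^ (b ^^^ d) = a ^^^ d by simp [Nat.xor_assoc, Nat.xor_left_comm]] at had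
  omega

theorem testBit_log2_xor_ne {a b : ℕ} (h : a ≠ b) :
    a.testBit (a ^^^ b).log2 ≠ b.testBit (a ^^^ b).log2 := by
  have := Nat.testBit_log2 (by simpa [xor_eq_zero_iff] using h : a ^^^ b ≠ 0)
  simpa [Nat.testBit_xor] using this

end Nat

theorem mem_colorsOn {V β : Type*} [DecidableEq V] [DecidableEq β] {c : V → V → β}
    {S : Finset V} {x : β} : x ∈ colorsOn c S ↔ ∃ a ∈ S, ∃ b ∈ S, a ≠ b ∧ c a b = x := by
  simp [colorsOn, and_assoc]

theorem card_le_two_pow_card_colorsOn {V β : Type*} [DecidableEq V] [DecidableEq β]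
    (c : V → V → β) (bit : V → β → Bool)
    (hbit : ∀ a b, a ≠ b → bit a (c a b) ≠ bit b (c a b)) (S : Finset V) :
    #S ≤ 2 ^ #(colorsOn c S) := by
  calc #S ≤ #(colorsOn c S).powerset := by
        refine card_le_card_of_injOn (fun v => (colorsOn c S).filter (bit v ·))
          (fun v _ => mem_powerset.2 (filter_subset _ _)) ?_
        intro a ha b hb hab
        by_contra hne
        have hmem : c a b ∈ colorsOn c S := mem_colorsOn.2 ⟨a, ha, b, hb, hne, rfl⟩
        have := congrArg (c a b ∈ ·) hab
        simp only [mem_filter, hmem, true_and, eq_iff_iff] at this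
        exact hbit a b hne (Bool.eq_iff_iff.2 this)
    _ = 2 ^ #(colorsOn c S) := card_powerset _

section HighBit

variable {n k : ℕ} (hk : 0 < k) (hn : n ≤ 2 ^ k)

def highBitColoring (a b : Fin n) : Fin k :=
  ⟨(a.val ^^^ b.val).log2, by
    rcases eq_or_ne (a.val ^^^ b.val) 0 with h | h
    · simpa [h] using hk
    · exact (Nat.log2_lt h).2 (Nat.xor_lt_two_pow (a.2.trans_le hn) (b.2.trans_le hn))⟩

theorem isGallai_highBitColoring : IsGallai (highBitColoring hk hn) := by
  refine ⟨fun a b => Fin.ext (by simp [highBitColoring, Nat.xor_comm]), fun a b d _ _ _ => ?_⟩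
  simpa only [ne_eq, Fin.ext_iff, highBitColoring] using Nat.log2_xor_not_rainbow a b d

theorem card_le_two_pow_card_colorsOn_highBitColoring (S : Finset (Fin n)) :
    #S ≤ 2 ^ #(colorsOn (highBitColoring hk hn) S) :=
  card_le_two_pow_card_colorsOn _ (fun (v : Fin n) (i : Fin k) => v.val.testBit i)
    (fun _ _ h => Nat.testBit_log2_xor_ne (Fin.val_injective.ne h)) S

end HighBit

section Ramsey

variable {V β : Type*} [LinearOrder V] [Fintype β]

theorem exists_subset_card_eq_forall_lt_color_eq (c : V → V → β) (m : ℕ) (A : Finset V)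
    (hA : (Fintype.card β + 1) ^ m ≤ #A) :
    ∃ T ⊆ A, #T = m ∧ ∃ g : V → β, ∀ x ∈ T, ∀ y ∈ T, x < y → c x y = g x := by
  classical
  induction m generalizing A with
  | zero => exact ⟨∅, empty_subset A, rfl, fun v => c v v, by simp⟩
  | succ m ih =>
    have hA_ne : A.Nonempty := card_pos.1 (lt_of_lt_of_le (by positivity) hA)
    set v := A.min' hA_ne
    have hvA : v ∈ A := A.min'_mem hA_ne
    have hcard : Fintype.card β * (Fintype.card β + 1) ^ m ≤ #(A.erase v) := by
      have := Nat.one_le_pow m (Fintype.card β + 1) (by omega)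
      rw [card_erase_of_mem hvA]
      rw [pow_succ, mul_add_one, mul_comm] at hA
      omega
    obtain ⟨i, -, hi⟩ := exists_le_card_fiber_of_mul_le_card_of_maps_to
      (f := c v) (fun _ _ => mem_univ _) ⟨c v v, mem_univ _⟩ (by simpa using hcard)
    obtain ⟨T, hTA, hT, g, hg⟩ := ih _ hi
    have hT_erase : T ⊆ A.erase v := hTA.trans (filter_subset _ _)
    have hvT : v ∉ T := fun h => (mem_erase.1 (hT_erase h)).1 rfl
    have hsub : insert v T ⊆ A := insert_subset hvA (hT_erase.trans (erase_subset v A))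
    refine ⟨insert v T, hsub, by rw [card_insert_of_notMem hvT, hT], Function.update g v i, ?_⟩
    rintro x hx y hy hxy
    have hyT : y ∈ T := (mem_insert.1 hy).resolve_left ((A.min'_le x (hsub hx)).trans_lt hxy).ne'
    rcases mem_insert.1 hx with rfl | hxT
    · rw [Function.update_self]
      exact (mem_filter.1 (hTA hyT)).2
    · rw [Function.update_of_ne (ne_of_mem_of_not_mem hxT hvT)]
      exact hg x hxT y hyT hxy

theorem exists_card_eq_card_colorsOn_le_one [Fintype V] [DecidableEq β] [Nonempty β]
    {c : V → V → β} (hc : ∀ a b, c a b = c b a) (p : ℕ)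
    (hV : (Fintype.card β + 1) ^ (Fintype.card β * p) ≤ Fintype.card V) :
    ∃ S : Finset V, #S = p ∧ #(colorsOn c S) ≤ 1 := by
  obtain ⟨T, -, hT, g, hg⟩ := exists_subset_card_eq_forall_lt_color_eq c _ univ hV
  obtain ⟨i, -, hi⟩ := exists_le_card_fiber_of_mul_le_card_of_maps_to
    (s := T) (f := g) (n := p) (fun _ _ => mem_univ _) univ_nonempty (by simp [hT, mul_comm])
  obtain ⟨S, hS, rfl⟩ := exists_subset_card_eq hi
  refine ⟨S, rfl, card_le_one.2 fun x hx y hy => ?_⟩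
  have h_eq_i : ∀ x ∈ colorsOn c S, x = i := by
    intro x hx
    obtain ⟨a, ha, b, hb, hab, rfl⟩ := mem_colorsOn.1 hx
    have ha' := mem_filter.1 (hS ha)
    have hb' := mem_filter.1 (hS hb)
    rcases hab.lt_or_gt with h | h
    · rw [hg a ha'.1 b hb'.1 h, ha'.2]
    · rw [hc, hg b hb'.1 a ha'.1 h, hb'.2]
  rw [h_eq_i x hx, h_eq_i y hy]

end Ramsey

theorem le_gallaiNum {k q p N : ℕ} (hk : 0 < k) (hq : 1 ≤ q)
    (h : ∀ n < N, ∃ c : Fin n → Fin n → Fin k, IsGallai c ∧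
      ∀ S : Finset (Fin n), #S = p → q < #(colorsOn c S)) :
    N ≤ gallaiNum k q p := by
  have : NeZero k := ⟨hk.ne'⟩
  refine le_csInf ⟨(k + 1) ^ (k * p), by positivity, fun c hc => ?_⟩ ?_
  · obtain ⟨S, hS, hcol⟩ := exists_card_eq_card_colorsOn_le_one hc.1 p (by simp)
    exact ⟨S, hS, hcol.trans hq⟩
  · rintro n ⟨-, hn⟩
    by_contra! hlt
    obtain ⟨c, hc, hcol⟩ := h n hlt
    obtain ⟨S, hS, hSq⟩ := hn c hc
    exact (hcol S hS).not_ge hSq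

theorem gallaiNum_log_lower (p k : ℕ) (hp : 5 ≤ p) (hk : Nat.log 2 (p - 1) ≤ k) :
    2 ^ k + 1 ≤ gallaiNum k (Nat.log 2 (p - 1)) p ∧
    ∃ c : Fin (2 ^ k) → Fin (2 ^ k) → Fin k, IsGallai c ∧
      ∀ S : Finset (Fin (2 ^ k)), S.card = p →
        Nat.log 2 (p - 1) + 1 ≤ (colorsOn c S).card := by
  have hq : 1 ≤ Nat.log 2 (p - 1) := Nat.le_log_of_pow_le (by norm_num) (by omega)
  have hk0 : 0 < k := by omega
  have hcolors {n : ℕ} (hn : n ≤ 2 ^ k) (S : Finset (Fin n)) (hS : #S = p) :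
      Nat.log 2 (p - 1) + 1 ≤ #(colorsOn (highBitColoring hk0 hn) S) :=
    Nat.log_lt_of_lt_pow (by omega)
      (by have := card_le_two_pow_card_colorsOn_highBitColoring hk0 hn S; omega)
  exact ⟨le_gallaiNum hk0 hq fun n hn => ⟨_, isGallai_highBitColoring hk0 _, hcolors (by omega)⟩,
    _, isGallai_highBitColoring hk0 le_rfl, hcolors le_rfl⟩
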